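/- arXiv:1812.10081 — 5 statements merged into one kernel-verified Lean document; each statement's English description precedes it below -/
import Mathlib

section
/- Let u, v, t be unit vectors in a complex inner product space. Then |⟨u, t⟩|² + |⟨t, v⟩|² ≤ 1 + |⟨u, v⟩|. -/
/-!
Put `s = ⟪u, t⟫ • u + ⟪v, t⟫ • v` and `S = |⟪u, t⟫|² + |⟪v, t⟫|²`. Then `⟪s, t⟫ = S`, so `S ≤ ‖s‖`
by Cauchy–Schwarz, while expanding `‖s‖²` and using `2|a||b| ≤ |a|² + |b|²` gives
`‖s‖² ≤ S (1 + |⟪u, v⟫|)`. Hence `S² ≤ S (1 + |⟪u, v⟫|)`.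
-/

open scoped InnerProductSpace

section

variable {𝕜 E : Type*} [RCLike 𝕜] [NormedAddCommGroup E] [InnerProductSpace 𝕜 E]

theorem norm_smul_add_smul_sq_le {u v : E} (hu : ‖u‖ = 1) (hv : ‖v‖ = 1) (a b : 𝕜) :
    ‖a • u + b • v‖ ^ 2 ≤ (‖a‖ ^ 2 + ‖b‖ ^ 2) * (1 + ‖⟪u, v⟫_𝕜‖) := by
  have hcross : RCLike.re ⟪a • u, b • v⟫_𝕜 ≤ ‖a‖ * ‖b‖ * ‖⟪u, v⟫_𝕜‖ :=
    calc RCLike.re ⟪a • u, b • v⟫_𝕜 ≤ ‖⟪a • u, b • v⟫_𝕜‖ := RCLike.re_le_norm _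
      _ = ‖a‖ * ‖b‖ * ‖⟪u, v⟫_𝕜‖ := by
        rw [inner_smul_left, inner_smul_right, norm_mul, norm_mul, RCLike.norm_conj, mul_assoc]
  calc ‖a • u + b • v‖ ^ 2 = ‖a‖ ^ 2 + 2 * RCLike.re ⟪a • u, b • v⟫_𝕜 + ‖b‖ ^ 2 := by
        rw [@norm_add_sq 𝕜, norm_smul, norm_smul, hu, hv, mul_one, mul_one]
    _ ≤ ‖a‖ ^ 2 + 2 * (‖a‖ * ‖b‖ * ‖⟪u, v⟫_𝕜‖) + ‖b‖ ^ 2 := by gcongr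
    _ ≤ (‖a‖ ^ 2 + ‖b‖ ^ 2) * (1 + ‖⟪u, v⟫_𝕜‖) := by
        nlinarith [sq_nonneg (‖a‖ - ‖b‖), norm_nonneg ⟪u, v⟫_𝕜]

theorem inner_inner_smul_add_inner_smul_left (u v t : E) :
    ⟪⟪u, t⟫_𝕜 • u + ⟪v, t⟫_𝕜 • v, t⟫_𝕜 = ((‖⟪u, t⟫_𝕜‖ ^ 2 + ‖⟪v, t⟫_𝕜‖ ^ 2 : ℝ) : 𝕜) := by
  rw [inner_add_left, inner_smul_left, inner_smul_left, RCLike.conj_mul, RCLike.conj_mul]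
  push_cast
  rfl

theorem norm_inner_sq_add_norm_inner_sq_le {u v t : E} (hu : ‖u‖ = 1) (hv : ‖v‖ = 1)
    (ht : ‖t‖ = 1) : ‖⟪u, t⟫_𝕜‖ ^ 2 + ‖⟪v, t⟫_𝕜‖ ^ 2 ≤ 1 + ‖⟪u, v⟫_𝕜‖ := by
  set S := ‖⟪u, t⟫_𝕜‖ ^ 2 + ‖⟪v, t⟫_𝕜‖ ^ 2
  set s := ⟪u, t⟫_𝕜 • u + ⟪v, t⟫_𝕜 • v
  have hS_nonneg : 0 ≤ S := by positivity
  have hS_le : S ≤ ‖s‖ :=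
    calc S = ‖⟪s, t⟫_𝕜‖ := by
          rw [inner_inner_smul_add_inner_smul_left, RCLike.norm_ofReal, abs_of_nonneg hS_nonneg]
      _ ≤ ‖s‖ * ‖t‖ := norm_inner_le_norm _ _
      _ = ‖s‖ := by rw [ht, mul_one]
  have hs_sq : ‖s‖ ^ 2 ≤ S * (1 + ‖⟪u, v⟫_𝕜‖) := norm_smul_add_smul_sq_le hu hv _ _
  nlinarith [norm_nonneg ⟪u, v⟫_𝕜]

end

/-- For unit vectors `u, v, t` in a complex inner product space,
`|⟨u,t⟩|² + |⟨t,v⟩|² ≤ 1 + |⟨u,v⟩|`. -/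
theorem stmt_2 {E : Type*} [NormedAddCommGroup E] [InnerProductSpace ℂ E]
    (u v t : E) (hu : ‖u‖ = 1) (hv : ‖v‖ = 1) (ht : ‖t‖ = 1) :
    ‖⟪u, t⟫_ℂ‖ ^ 2 + ‖⟪t, v⟫_ℂ‖ ^ 2 ≤ 1 + ‖⟪u, v⟫_ℂ‖ := by
  rw [norm_inner_symm t v]
  exact norm_inner_sq_add_norm_inner_sq_le hu hv ht
end

section
/- Let L > 0 and let θ : [0, L] → ℝ be measurable. Then |∫₀ᴸ (1 + e^{iθ(x)})/2 · dx/L| ≤ 1 − (1/π²) ∫₀ᴸ d(θ(x))² dx/L, where d(y) = dist(y, 2πℤ) is the distance from y to the nearest integer multiple of 2π. -/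
/-!
Pointwise, `‖(1 + e^{iy})/2‖ = |cos (y/2)| = cos (r/2)`, where `r = y - 2πn` is the reduction
of `y` into `[-π, π]`, so that `d(y) ≤ |r|`. Since `1 - cos (2u) = 2 sin² u` and the concave
sine lies above its chord `√2/2 · x` over `π/4 · x` for `x ∈ [0, 1]`, one gets
`cos (π x / 2) ≤ 1 - x²` for `|x| ≤ 1`, i.e. `cos (r/2) ≤ 1 - r²/π²`. Integrating this bound
gives the theorem.
-/

open Real MeasureTheory

namespace Real

lemma sqrt_two_div_two_mul_le_sin_pi_div_four_mul {x : ℝ} (hx₀ : 0 ≤ x) (hx₁ : x ≤ 1) :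
    √2 / 2 * x ≤ sin (π / 4 * x) := by
  simpa [mul_comm x] using
    strictConcaveOn_sin_Icc.concaveOn.2 (x := 0) (y := π / 4) ⟨le_rfl, pi_pos.le⟩
      ⟨by positivity, by linarith [pi_pos]⟩ (sub_nonneg.2 hx₁) hx₀

lemma cos_pi_div_two_mul_le_one_sub_sq {x : ℝ} (hx : |x| ≤ 1) :
    cos (π / 2 * x) ≤ 1 - x ^ 2 := by
  have hsin := sqrt_two_div_two_mul_le_sin_pi_div_four_mul (abs_nonneg x) hx
  have hsq : x ^ 2 / 2 ≤ sin (π / 4 * |x|) ^ 2 := by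
    calc x ^ 2 / 2 = (√2 / 2 * |x|) ^ 2 := by
          rw [mul_pow, div_pow, sq_sqrt zero_le_two, sq_abs]; ring
      _ ≤ _ := pow_le_pow_left₀ (by positivity) hsin 2
  have hcos : cos (π / 2 * x) = 1 - 2 * sin (π / 4 * |x|) ^ 2 := by
    rw [← cos_abs, abs_mul, abs_of_pos (by positivity),
      show π / 2 * |x| = 2 * (π / 4 * |x|) by ring, cos_two_mul', cos_sq']
    ring
  linarith

lemma exists_int_abs_sub_two_pi_mul_le_pi (y : ℝ) : ∃ n : ℤ, |y - 2 * π * n| ≤ π := by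
  refine ⟨round (y / (2 * π)), ?_⟩
  have h2π : 0 < 2 * π := by positivity
  calc |y - 2 * π * round (y / (2 * π))| = 2 * π * |y / (2 * π) - round (y / (2 * π))| := by
        rw [← abs_of_pos h2π, ← abs_mul, abs_of_pos h2π, mul_sub, mul_div_cancel₀ _ h2π.ne']
    _ ≤ 2 * π * (1 / 2) := by gcongr; exact abs_sub_round _
    _ = π := by ring

lemma abs_cos_half_sub_two_pi_mul (y : ℝ) (n : ℤ) :
    |cos ((y - 2 * π * n) / 2)| = |cos (y / 2)| := by
  have h := cos_add_int_mul_pi ((y - 2 * π * n) / 2) n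
  rw [show (y - 2 * π * n) / 2 + n * π = y / 2 by ring] at h
  rw [h, abs_mul, abs_zpow, abs_neg, abs_one, one_zpow, one_mul]

end Real

lemma Complex.norm_one_add_exp_mul_I_div_two (y : ℝ) :
    ‖(1 + Complex.exp (Complex.I * y)) / 2‖ = |Real.cos (y / 2)| := by
  have hfac : (1 + Complex.exp (Complex.I * y)) / 2 =
      Complex.exp ((y / 2 : ℝ) * Complex.I) * Complex.cos (y / 2 : ℝ) := by
    rw [Complex.cos, ← mul_div_assoc, mul_add, ← Complex.exp_add, ← Complex.exp_add]
    push_cast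
    ring_nf
    simp [add_comm]
  rw [hfac, norm_mul, Complex.norm_exp_ofReal_mul_I, one_mul, ← Complex.ofReal_cos,
    Complex.norm_real, Real.norm_eq_abs]

lemma infDist_two_pi_int_le_pi (y : ℝ) :
    Metric.infDist y (Set.range fun n : ℤ => 2 * π * n) ≤ π := by
  obtain ⟨n, hn⟩ := exists_int_abs_sub_two_pi_mul_le_pi y
  exact (Metric.infDist_le_dist_of_mem (Set.mem_range_self n)).trans hn

lemma norm_one_add_exp_mul_I_div_two_le (y : ℝ) :
    ‖(1 + Complex.exp (Complex.I * y)) / 2‖ ≤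
      1 - Metric.infDist y (Set.range fun n : ℤ => 2 * π * n) ^ 2 / π ^ 2 := by
  obtain ⟨n, hn⟩ := exists_int_abs_sub_two_pi_mul_le_pi y
  set r := y - 2 * π * n
  have hd : Metric.infDist y (Set.range fun n : ℤ => 2 * π * n) ≤ |r| :=
    Metric.infDist_le_dist_of_mem ⟨n, rfl⟩
  have hr : |r / π| ≤ 1 := by
    rw [abs_div, abs_of_pos pi_pos]; exact div_le_one_of_le₀ hn pi_pos.le
  calc ‖(1 + Complex.exp (Complex.I * y)) / 2‖ = |Real.cos (π / 2 * (r / π))| := by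
        rw [Complex.norm_one_add_exp_mul_I_div_two, ← abs_cos_half_sub_two_pi_mul y n,
          div_mul_div_comm, mul_comm π r, mul_div_mul_right _ _ pi_pos.ne']
    _ = Real.cos (π / 2 * (r / π)) := by
        refine abs_of_nonneg (cos_nonneg_of_mem_Icc ⟨?_, ?_⟩) <;>
          nlinarith [abs_le.1 hr, pi_pos]
    _ ≤ 1 - (r / π) ^ 2 := cos_pi_div_two_mul_le_one_sub_sq hr
    _ ≤ 1 - Metric.infDist y (Set.range fun n : ℤ => 2 * π * n) ^ 2 / π ^ 2 := by
        rw [div_pow, ← sq_abs r]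
        gcongr
        exact Metric.infDist_nonneg

/-- For measurable `θ : [0,L] → ℝ`,
`|∫₀ᴸ (1 + e^{iθ(x)})/2 dx/L| ≤ 1 − (1/π²) ∫₀ᴸ d(θ(x))² dx/L`,
where `d(y)` is the distance from `y` to `2πℤ`. -/
theorem stmt_6 (L : ℝ) (hL : 0 < L) (θ : ℝ → ℝ) (hθ : Measurable θ) :
    ‖∫ x in (0:ℝ)..L, (1 + Complex.exp (Complex.I * θ x)) / 2‖ / L ≤
      1 - (1 / Real.pi ^ 2) *
        ((∫ x in (0:ℝ)..L,
            (Metric.infDist (θ x) (Set.range fun n : ℤ => 2 * Real.pi * n)) ^ 2) / L) := by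
  set d := fun x => Metric.infDist (θ x) (Set.range fun n : ℤ => 2 * π * n)
  have hd_int : IntervalIntegrable (fun x => d x ^ 2) volume 0 L := by
    refine (intervalIntegrable_const (c := π ^ 2)).mono_fun'
      (((Metric.continuous_infDist_pt _).measurable.comp hθ).pow_const 2).aestronglyMeasurable
      (ae_of_all _ fun x => ?_)
    change ‖d x ^ 2‖ ≤ π ^ 2
    rw [Real.norm_eq_abs, abs_sq]
    exact pow_le_pow_left₀ Metric.infDist_nonneg (infDist_two_pi_int_le_pi _) 2
  have hbound : ‖∫ x in (0:ℝ)..L, (1 + Complex.exp (Complex.I * θ x)) / 2‖ ≤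
      ∫ x in (0:ℝ)..L, (1 - d x ^ 2 / π ^ 2) :=
    intervalIntegral.norm_integral_le_of_norm_le hL.le
      (ae_of_all _ fun x _ => norm_one_add_exp_mul_I_div_two_le (θ x))
      (intervalIntegrable_const.sub (hd_int.div_const _))
  have hmean : ∫ x in (0:ℝ)..L, (1 - d x ^ 2 / π ^ 2) =
      L - (∫ x in (0:ℝ)..L, d x ^ 2) / π ^ 2 := by
    rw [intervalIntegral.integral_sub intervalIntegrable_const (hd_int.div_const _),
      intervalIntegral.integral_div, intervalIntegral.integral_const, sub_zero, smul_eq_mul,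
      mul_one]
  calc _ ≤ (L - (∫ x in (0:ℝ)..L, d x ^ 2) / π ^ 2) / L := by gcongr; exact hmean ▸ hbound
    _ = _ := by rw [sub_div, div_self hL.ne']; ring
end

section
/- Let α ∈ ℝ and let m ≥ 0 be an integer. If dist(2ⁿα, 2πℤ) < 2π/3 for every n = 0, 1, …, m, then dist(α, 2πℤ) < (2π/3)·2^{−m}. -/
open Real

private lemma infDist_eq_round (x : ℝ) :
    Metric.infDist x (Set.range fun j : ℤ => 2 * Real.pi * j) =
      |x - 2 * Real.pi * round (x / (2 * Real.pi))| := by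
  have h2pi : (0:ℝ) < 2 * Real.pi := by positivity
  apply le_antisymm
  · have hm : (2 * Real.pi * (round (x / (2 * Real.pi)) : ℤ) : ℝ)
        ∈ Set.range fun j : ℤ => 2 * Real.pi * j := ⟨round (x / (2 * Real.pi)), rfl⟩
    have := Metric.infDist_le_dist_of_mem (x := x) hm
    simpa [Real.dist_eq] using this
  · by_contra hlt
    push_neg at hlt
    obtain ⟨y, ⟨j, rfl⟩, hy⟩ := (Metric.infDist_lt_iff (Set.range_nonempty _)).mp hlt
    rw [Real.dist_eq] at hy
    apply absurd hy
    push_neg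
    have h := round_le (x / (2 * Real.pi)) j
    have hne : (2 * Real.pi) ≠ 0 := ne_of_gt h2pi
    have e1 : |x - 2 * Real.pi * round (x / (2 * Real.pi))|
        = (2 * Real.pi) * |x / (2 * Real.pi) - round (x / (2 * Real.pi))| := by
      rw [show x - 2 * Real.pi * round (x / (2 * Real.pi))
          = (2 * Real.pi) * (x / (2 * Real.pi) - round (x / (2 * Real.pi))) by
        field_simp, abs_mul, abs_of_pos h2pi]
    have e2 : |x - 2 * Real.pi * j|
        = (2 * Real.pi) * |x / (2 * Real.pi) - j| := by
      rw [show x - 2 * Real.pi * (j:ℝ)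
          = (2 * Real.pi) * (x / (2 * Real.pi) - j) by field_simp, abs_mul, abs_of_pos h2pi]
    rw [e1, e2] at *
    exact mul_le_mul_of_nonneg_left h h2pi.le

private lemma key_step (x : ℝ)
    (h1 : |x - 2 * Real.pi * round (x / (2 * Real.pi))| < 2 * Real.pi / 3)
    (h2 : |2 * x - 2 * Real.pi * round (2 * x / (2 * Real.pi))| < 2 * Real.pi / 3) :
    |x - 2 * Real.pi * round (x / (2 * Real.pi))|
      = |2 * x - 2 * Real.pi * round (2 * x / (2 * Real.pi))| / 2 := by
  have h2pi : (0:ℝ) < 2 * Real.pi := by positivity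
  set n := round (x / (2 * Real.pi)) with hn
  set k := round (2 * x / (2 * Real.pi)) with hk
  have hkey : k = 2 * n := by
    have hd : |2 * Real.pi * (k:ℝ) - 2 * Real.pi * (2 * n : ℤ)| < 2 * Real.pi := by
      have : |2 * Real.pi * (k:ℝ) - 2 * Real.pi * ((2 * n : ℤ) : ℝ)|
          ≤ |2 * x - 2 * Real.pi * k| + |2 * x - 2 * Real.pi * ((2 * n : ℤ) : ℝ)| := by
        have := abs_sub (2 * x - 2 * Real.pi * (k:ℝ)) (2 * x - 2 * Real.pi * ((2 * n : ℤ):ℝ))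
        calc |2 * Real.pi * (k:ℝ) - 2 * Real.pi * ((2 * n : ℤ):ℝ)|
            = |(2 * x - 2 * Real.pi * ((2 * n : ℤ):ℝ)) - (2 * x - 2 * Real.pi * (k:ℝ))| := by
              ring_nf
          _ ≤ |2 * x - 2 * Real.pi * ((2 * n : ℤ):ℝ)| + |2 * x - 2 * Real.pi * (k:ℝ)| :=
              abs_sub _ _
          _ = |2 * x - 2 * Real.pi * k| + |2 * x - 2 * Real.pi * ((2 * n : ℤ):ℝ)| := by ring
      have h3 : |2 * x - 2 * Real.pi * ((2 * n : ℤ) : ℝ)| < 2 * (2 * Real.pi / 3) := by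
        have : |2 * x - 2 * Real.pi * ((2 * n : ℤ) : ℝ)| = 2 * |x - 2 * Real.pi * n| := by
          rw [show (2 * x - 2 * Real.pi * ((2 * n : ℤ) : ℝ)) = 2 * (x - 2 * Real.pi * n) by
            push_cast; ring, abs_mul, abs_two]
        rw [this]
        linarith
      calc |2 * Real.pi * (k:ℝ) - 2 * Real.pi * ((2 * n : ℤ):ℝ)|
          ≤ |2 * x - 2 * Real.pi * k| + |2 * x - 2 * Real.pi * ((2 * n : ℤ):ℝ)| := this
        _ < 2 * Real.pi / 3 + 2 * (2 * Real.pi / 3) := by linarith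
        _ = 2 * Real.pi := by ring
    have : |(k : ℝ) - ((2 * n : ℤ) : ℝ)| < 1 := by
      have e : |2 * Real.pi * (k:ℝ) - 2 * Real.pi * ((2*n:ℤ):ℝ)|
          = 2 * Real.pi * |(k:ℝ) - ((2*n:ℤ):ℝ)| := by
        rw [show (2 * Real.pi * (k:ℝ) - 2 * Real.pi * ((2*n:ℤ):ℝ))
            = (2 * Real.pi) * ((k:ℝ) - ((2*n:ℤ):ℝ)) by ring, abs_mul, abs_of_pos h2pi]
      rw [e] at hd
      nlinarith [abs_nonneg ((k:ℝ) - ((2*n:ℤ):ℝ))]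
    have hint : |k - 2 * n| < 1 := by
      have : |((k - 2*n : ℤ) : ℝ)| < 1 := by push_cast; push_cast at this; exact this
      exact_mod_cast this
    have := Int.abs_lt_one_iff.mp hint
    omega
  rw [hkey]
  have : |2 * x - 2 * Real.pi * ((2 * n : ℤ) : ℝ)| = 2 * |x - 2 * Real.pi * n| := by
    rw [show (2 * x - 2 * Real.pi * ((2 * n : ℤ) : ℝ)) = 2 * (x - 2 * Real.pi * n) by
      push_cast; ring, abs_mul, abs_two]
  rw [this]
  ring

private lemma main_aux : ∀ (m : ℕ) (x : ℝ),
    (∀ n : ℕ, n ≤ m →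
      |2 ^ n * x - 2 * Real.pi * round (2 ^ n * x / (2 * Real.pi))| < 2 * Real.pi / 3) →
    |x - 2 * Real.pi * round (x / (2 * Real.pi))| < (2 * Real.pi / 3) / 2 ^ m := by
  intro m
  induction m with
  | zero =>
    intro x h
    simpa using h 0 le_rfl
  | succ m ih =>
    intro x h
    have h0 : |x - 2 * Real.pi * round (x / (2 * Real.pi))| < 2 * Real.pi / 3 := by
      simpa using h 0 (Nat.zero_le _)
    have h2 : ∀ n : ℕ, n ≤ m →
        |2 ^ n * (2 * x) - 2 * Real.pi * round (2 ^ n * (2 * x) / (2 * Real.pi))|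
          < 2 * Real.pi / 3 := by
      intro n hn
      have e : 2 ^ n * (2 * x) = 2 ^ (n + 1) * x := by ring
      rw [e]
      exact h (n + 1) (Nat.succ_le_succ hn)
    have hih := ih (2 * x) h2
    have h2x : |2 * x - 2 * Real.pi * round (2 * x / (2 * Real.pi))| < 2 * Real.pi / 3 := by
      have hpos : (0:ℝ) < 2 ^ m := by positivity
      have : (2 * Real.pi / 3) / 2 ^ m ≤ 2 * Real.pi / 3 := by
        apply div_le_self (by positivity)
        exact_mod_cast Nat.one_le_two_pow
      linarith
    rw [key_step x h0 h2x]
    rw [pow_succ]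
    rw [div_lt_iff₀ (by positivity : (0:ℝ) < 2)] at *
    calc |2 * x - 2 * Real.pi * round (2 * x / (2 * Real.pi))|
        < (2 * Real.pi / 3) / 2 ^ m := hih
      _ = (2 * Real.pi / 3) / (2 ^ m * 2) * 2 := by field_simp
    

/-- Kitaev phase refinement: if `dist(2ⁿα, 2πℤ) < 2π/3` for every `n = 0, …, m`,
then `dist(α, 2πℤ)` < `(2π/3)·2^{−m}`. -/
theorem stmt_9 (α : ℝ) (m : ℕ)
    (h : ∀ n : ℕ, n ≤ m →
      Metric.infDist (2 ^ n * α) (Set.range fun j : ℤ => 2 * Real.pi * j) <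
        2 * Real.pi / 3) :
    Metric.infDist α (Set.range fun j : ℤ => 2 * Real.pi * j) <
      (2 * Real.pi / 3) / 2 ^ m := by
  rw [infDist_eq_round]
  apply main_aux m α
  intro n hn
  rw [← infDist_eq_round]
  exact h n hn
end

section
/- For every integer m ≥ 0 there exist a constant H > 0 and a function h : ℝ → ℝ such that (i) h(y) = 0 for all y outside the interval [−1, 1); (ii) |h(y)| ≤ H for all y; and (iii) for every θ ∈ [0, 1) and every k ∈ {0, 1, …, m}, Σ_{j=0}^{m} (2(j+θ)/(m+1) − 1)^k · h(2(j+θ)/(m+1) − 1) equals 1 if k = 0 and equals 0 if 1 ≤ k ≤ m. -/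
/-!
For fixed `θ`, the values `h(x_j)` at the `m + 1` distinct nodes `x_j = 2(j+θ)/(m+1) − 1` are
forced to be the Lagrange weights `ℓ_j(0)`: condition (iii) says that the quadrature rule
`p ↦ ∑ j, p(x_j) h(x_j)` evaluates every polynomial of degree `≤ m` at `0`. Every `y ∈ [−1, 1)`
is exactly one such node, with `j + θ = (y+1)(m+1)/2`, so this defines `h`. Since the nodes lie
in `[−1, 1)` and are at least `2/(m+1)` apart, each factor `|0 − x_i| / |x_j − x_i|` of `ℓ_j(0)`
is at most `(m+1)/2`.
-/

open Finset Polynomial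

namespace Lagrange

variable {F ι : Type*} [DecidableEq ι] {s : Finset ι} {v : ι → F}

theorem sum_pow_mul_eval_basis [Field F] (hvs : Set.InjOn v s) {k : ℕ} (hk : k < #s) (x : F) :
    ∑ i ∈ s, v i ^ k * (Lagrange.basis s v i).eval x = x ^ k := by
  have hdeg : ((X : F[X]) ^ k).degree < #s := by
    rw [degree_X_pow]
    exact_mod_cast hk
  have := congrArg (eval x) (eq_interpolate hvs hdeg)
  simpa [interpolate_apply, eval_finsetSum] using this.symm

theorem norm_eval_basis_le [NormedField F] (i : ι) (x : F) {A δ : ℝ} (hδ : 0 < δ)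
    (hx : ∀ k ∈ s, ‖x - v k‖ ≤ A) (hsep : ∀ k ∈ s, k ≠ i → δ ≤ ‖v i - v k‖) :
    ‖(Lagrange.basis s v i).eval x‖ ≤ (A / δ) ^ #(s.erase i) := by
  have heval : (Lagrange.basis s v i).eval x = ∏ k ∈ s.erase i, (x - v k) / (v i - v k) := by
    rw [Lagrange.basis, eval_prod]
    refine prod_congr rfl fun k _ => ?_
    simp [basisDivisor, div_eq_inv_mul]
  rw [heval, norm_prod, ← prod_const]
  refine prod_le_prod (fun _ _ => norm_nonneg _) fun k hk => ?_
  obtain ⟨hki, hks⟩ := mem_erase.1 hk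
  rw [norm_div]
  exact div_le_div₀ ((norm_nonneg _).trans (hx k hks)) (hx k hks) hδ (hsep k hks hki)

end Lagrange

noncomputable section

def shiftedNode (m : ℕ) (θ : ℝ) (j : ℕ) : ℝ := 2 * (j + θ) / (m + 1) - 1

def nodePosition (m : ℕ) (y : ℝ) : ℝ := (y + 1) * (m + 1) / 2

def smoothingKernel (m : ℕ) : ℝ → ℝ :=
  Set.indicator (Set.Ico (-1) 1) fun y =>
    (Lagrange.basis (range (m + 1)) (shiftedNode m (Int.fract (nodePosition m y)))
      ⌊nodePosition m y⌋₊).eval 0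

variable {m : ℕ} {θ : ℝ}

theorem shiftedNode_injective (m : ℕ) (θ : ℝ) : Function.Injective (shiftedNode m θ) := by
  intro i j hij
  have : (i : ℝ) = j := by
    unfold shiftedNode at hij
    field_simp at hij
    linarith
  exact_mod_cast this

theorem shiftedNode_sub_shiftedNode (m : ℕ) (θ : ℝ) (i j : ℕ) :
    shiftedNode m θ i - shiftedNode m θ j = 2 * ((i : ℝ) - j) / (m + 1) := by
  unfold shiftedNode
  ring

theorem shiftedNode_mem_Ico (hθ : θ ∈ Set.Ico (0 : ℝ) 1) {j : ℕ} (hj : j < m + 1) :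
    shiftedNode m θ j ∈ Set.Ico (-1) 1 := by
  have hjm : (j : ℝ) + 1 ≤ m + 1 := by exact_mod_cast hj
  have hpos : (0 : ℝ) < m + 1 := by positivity
  unfold shiftedNode
  constructor
  · have : 0 ≤ 2 * ((j : ℝ) + θ) / (m + 1) := by have := hθ.1; positivity
    linarith
  · have : 2 * ((j : ℝ) + θ) / (m + 1) < 2 := by
      rw [div_lt_iff₀ hpos]
      linarith [hθ.2]
    linarith

theorem nodePosition_shiftedNode (m : ℕ) (θ : ℝ) (j : ℕ) :
    nodePosition m (shiftedNode m θ j) = j + θ := by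
  unfold nodePosition shiftedNode
  field_simp
  ring

theorem smoothingKernel_shiftedNode (hθ : θ ∈ Set.Ico (0 : ℝ) 1) {j : ℕ} (hj : j < m + 1) :
    smoothingKernel m (shiftedNode m θ j) =
      (Lagrange.basis (range (m + 1)) (shiftedNode m θ) j).eval 0 := by
  have hfract : Int.fract ((j : ℝ) + θ) = θ := by
    rw [Int.fract_natCast_add, Int.fract_eq_self.2 hθ]
  have hfloor : ⌊(j : ℝ) + θ⌋₊ = j := by
    rw [add_comm, Nat.floor_add_natCast hθ.1, Nat.floor_eq_zero.2 hθ.2, zero_add]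
  rw [smoothingKernel, Set.indicator_of_mem (shiftedNode_mem_Ico hθ hj),
    nodePosition_shiftedNode, hfract, hfloor]

theorem abs_eval_basis_shiftedNode_le (hθ : θ ∈ Set.Ico (0 : ℝ) 1) {j : ℕ} (hj : j < m + 1) :
    |(Lagrange.basis (range (m + 1)) (shiftedNode m θ) j).eval 0| ≤ ((m + 1) / 2) ^ m := by
  have hpos : (0 : ℝ) < m + 1 := by positivity
  have hsize : ∀ i ∈ range (m + 1), ‖0 - shiftedNode m θ i‖ ≤ 1 := fun i hi => by
    obtain ⟨h₁, h₂⟩ := shiftedNode_mem_Ico hθ (mem_range.1 hi)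
    rw [zero_sub, norm_neg, Real.norm_eq_abs, abs_le]
    constructor <;> linarith
  have hsep : ∀ i ∈ range (m + 1), i ≠ j →
      2 / (m + 1) ≤ ‖shiftedNode m θ j - shiftedNode m θ i‖ := fun i _ hij => by
    have : (1 : ℝ) ≤ |(j : ℝ) - i| := by
      have := Int.one_le_abs (sub_ne_zero.2 (Int.natCast_inj.not.2 (Ne.symm hij)))
      exact_mod_cast this
    rw [shiftedNode_sub_shiftedNode, Real.norm_eq_abs, abs_div, abs_mul, abs_two,
      abs_of_pos hpos]
    gcongr
    linarith
  have := Lagrange.norm_eval_basis_le j 0 (by positivity) hsize hsep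
  rwa [Real.norm_eq_abs, one_div_div, card_erase_of_mem (mem_range.2 hj), card_range,
    Nat.add_sub_cancel] at this

theorem abs_smoothingKernel_le (m : ℕ) (y : ℝ) : |smoothingKernel m y| ≤ ((m + 1) / 2) ^ m := by
  by_cases hy : y ∈ Set.Ico (-1) 1
  · set t := nodePosition m y
    have ht : 0 ≤ t := by
      have : 0 ≤ y + 1 := by linarith [hy.1]
      unfold t nodePosition
      positivity
    have hfloor : ⌊t⌋₊ < m + 1 := by
      rw [Nat.floor_lt ht]
      push_cast
      unfold t nodePosition
      rw [div_lt_iff₀ two_pos]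
      nlinarith [hy.2]
    rw [smoothingKernel, Set.indicator_of_mem hy]
    exact abs_eval_basis_shiftedNode_le ⟨Int.fract_nonneg t, Int.fract_lt_one t⟩ hfloor
  · rw [smoothingKernel, Set.indicator_of_notMem hy, abs_zero]
    positivity

end

/-- Existence of the smoothing kernel of the position-state method: a bounded
function `h` supported on `[−1, 1)` reproducing constants and annihilating the
monomials of degree `1, …, m` on the shifted nodes `2(j+θ)/(m+1) − 1`. -/
theorem stmt_11 (m : ℕ) :
    ∃ (H : ℝ) (h : ℝ → ℝ), 0 < H ∧
      (∀ y : ℝ, y ∉ Set.Ico (-1 : ℝ) 1 → h y = 0) ∧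
      (∀ y : ℝ, |h y| ≤ H) ∧
      (∀ θ : ℝ, θ ∈ Set.Ico (0 : ℝ) 1 → ∀ k : ℕ, k ≤ m →
        ∑ j ∈ Finset.range (m + 1),
            (2 * (j + θ) / (m + 1) - 1) ^ k * h (2 * (j + θ) / (m + 1) - 1) =
          if k = 0 then 1 else 0) := by
  refine ⟨((m + 1) / 2) ^ m, smoothingKernel m, by positivity,
    fun y hy => Set.indicator_of_notMem hy _, abs_smoothingKernel_le m, fun θ hθ k hk => ?_⟩
  have hexact := Lagrange.sum_pow_mul_eval_basis (s := range (m + 1)) (k := k)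
    (shiftedNode_injective m θ).injOn (by rwa [card_range, Nat.lt_succ_iff]) (0 : ℝ)
  rw [← zero_pow_eq, ← hexact]
  refine sum_congr rfl fun j hj => ?_
  rw [← smoothingKernel_shiftedNode hθ (mem_range.1 hj)]
  rfl
end

section
/- Let L > 0, let m ≥ 0 be an integer and σ ∈ (0, 1], set q = m + σ, and let c₀ = 2(2π)^m π^σ · sup_{0<y≤π} y^{−σ} sin y. Let φ(x) = Σ_{k=−n}^{n} φ_k e^{2πikx/L} be a real-valued trigonometric polynomial (so φ_{−k} = conj(φ_k)). If Σ_{k=1}^{n} k^{2q} |φ_k|² ≤ M²/(2c₀²), then for every ε > 0, ∫₀ᴸ |φ^{(m)}(x+ε) − φ^{(m)}(x)|² / ε^{2σ} · dx/L ≤ M²/L^{2q}. -/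
/-!
The increment `φ⁽ᵐ⁾(x + ε) - φ⁽ᵐ⁾(x)` is the real part of the trigonometric polynomial with
coefficients `c k (2πik/L)ᵐ (e^{2πikε/L} - 1)`, so Parseval on `[0, L]` bounds its squared
`L²` norm by `L Σ |c k|² (2πk/L)^{2m} (2 sin (πkε/L))²`. The supremum `C` of `y^{-σ} sin y`
over `(0, π]` is finite for `σ ≤ 1` and gives `|sin y| ≤ C y^σ` for all `y > 0`, which turns
the `k`-th term into `c₀² k^{2q} ε^{2σ} |c k|² / L^{2q}`; the symmetry `|c (-k)| = |c k|` folds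
the sum onto `k ≥ 1`.
-/

open Finset intervalIntegral
open scoped Real ComplexConjugate

section TrigonometricPolynomial

variable {L : ℝ}

theorem continuous_fourier_coe (n : ℤ) : Continuous fun x : ℝ => fourier n (x : AddCircle L) :=
  (fourier n).continuous.comp (AddCircle.continuous_mk' L)

theorem integral_fourier_coe (hL : 0 < L) (n : ℤ) :
    ∫ x in (0 : ℝ)..L, fourier n (x : AddCircle L) = if n = 0 then (L : ℂ) else 0 := by
  split_ifs with hn
  · simp [hn]
  · have hF := has_antideriv_at_fourier_neg (Fact.mk hL) (neg_ne_zero.2 hn)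
    simp only [neg_neg] at hF
    rw [integral_eq_sub_of_hasDerivAt (fun x _ => hF x)
      ((continuous_fourier_coe n).intervalIntegrable _ _)]
    simp [AddCircle.coe_period]

theorem integral_norm_sq_sum_fourier (hL : 0 < L) (s : Finset ℤ) (b : ℤ → ℂ) :
    ∫ x in (0 : ℝ)..L, ‖∑ k ∈ s, b k * fourier k (x : AddCircle L)‖ ^ 2 =
      L * ∑ k ∈ s, ‖b k‖ ^ 2 := by
  have hexpand : ∀ x : ℝ, ((‖∑ k ∈ s, b k * fourier k (x : AddCircle L)‖ ^ 2 : ℝ) : ℂ) =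
      ∑ k ∈ s, ∑ j ∈ s, b k * conj (b j) * fourier (k - j) (x : AddCircle L) := by
    intro x
    rw [Complex.ofReal_pow, ← Complex.mul_conj', map_sum, sum_mul_sum]
    refine sum_congr rfl fun k _ => sum_congr rfl fun j _ => ?_
    rw [map_mul, sub_eq_add_neg, fourier_add, fourier_neg]
    ring
  apply Complex.ofReal_injective
  rw [← intervalIntegral.integral_ofReal]
  simp_rw [hexpand]
  have hint : ∀ k j : ℤ, IntervalIntegrable
      (fun x : ℝ => b k * conj (b j) * fourier (k - j) (x : AddCircle L))
      MeasureTheory.volume 0 L :=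
    fun k j => (continuous_const.mul (continuous_fourier_coe _)).intervalIntegrable _ _
  rw [integral_finsetSum
    (f := fun k x => ∑ j ∈ s, b k * conj (b j) * fourier (k - j) (x : AddCircle L))
    fun k _ => by simpa only [Finset.sum_fn] using IntervalIntegrable.sum s fun j _ => hint k j]
  simp_rw [integral_finsetSum fun j _ => hint _ j, integral_const_mul,
    integral_fourier_coe hL, sub_eq_zero]
  simp [Complex.mul_conj', mul_sum, mul_comm]

theorem hasDerivAt_sum_fourier (s : Finset ℤ) (a : ℤ → ℂ) (x : ℝ) :
    HasDerivAt (fun y : ℝ => ∑ k ∈ s, a k * fourier k (y : AddCircle L))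
      (∑ k ∈ s, a k * (2 * π * Complex.I * k / L) * fourier k (x : AddCircle L)) x :=
  HasDerivAt.fun_sum fun k _ => by
    simpa only [mul_assoc] using (hasDerivAt_fourier L k x).const_mul (a k)

theorem iteratedDeriv_re_sum_fourier (s : Finset ℤ) (a : ℤ → ℂ) (m : ℕ) :
    iteratedDeriv m (fun x : ℝ => (∑ k ∈ s, a k * fourier k (x : AddCircle L)).re) =
      fun x : ℝ => (∑ k ∈ s, a k * (2 * π * Complex.I * k / L) ^ m *
        fourier k (x : AddCircle L)).re := by
  induction m with
  | zero => simp
  | succ m ih =>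
    rw [iteratedDeriv_succ, ih]
    funext x
    have h := Complex.reCLM.hasFDerivAt.comp_hasDerivAt x
      (hasDerivAt_sum_fourier (L := L) s (fun k => a k * (2 * π * Complex.I * k / L) ^ m) x)
    refine h.deriv.trans ?_
    simp only [Complex.reCLM_apply, pow_succ, mul_assoc]

theorem fourier_coe_add (k : ℤ) (x y : ℝ) :
    fourier k ((x + y : ℝ) : AddCircle L) =
      fourier k (x : AddCircle L) * fourier k (y : AddCircle L) := by
  simp only [fourier_coe_apply, ← Complex.exp_add]
  push_cast
  ring_nf

theorem norm_freq_pow_mul_fourier_sub_one (k : ℤ) (m : ℕ) (ε : ℝ) :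
    ‖(2 * π * Complex.I * k / L) ^ m * (fourier k (ε : AddCircle L) - 1)‖ =
      |(2 * π * k / L) ^ m * (2 * Real.sin (π * k * ε / L))| := by
  have hfreq : 2 * π * Complex.I * k / L = Complex.I * ((2 * π * k / L : ℝ) : ℂ) := by
    push_cast; ring
  have hphase : 2 * π * Complex.I * k * ε / L = Complex.I * ((2 * π * k * ε / L : ℝ) : ℂ) := by
    push_cast; ring
  rw [fourier_coe_apply, hphase, hfreq, norm_mul, Complex.norm_exp_I_mul_ofReal_sub_one, norm_pow,
    norm_mul, Complex.norm_I, one_mul, Complex.norm_real, Real.norm_eq_abs, Real.norm_eq_abs]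
  simp only [abs_mul, abs_pow]
  ring_nf

theorem integral_sq_iteratedDeriv_sub_le (hL : 0 < L) (s : Finset ℤ) (c : ℤ → ℂ) {φ : ℝ → ℝ}
    (hφ : ∀ x, φ x = (∑ k ∈ s, c k * fourier k (x : AddCircle L)).re) (m : ℕ) (ε : ℝ) :
    ∫ x in (0 : ℝ)..L, |iteratedDeriv m φ (x + ε) - iteratedDeriv m φ x| ^ 2 ≤
      L * ∑ k ∈ s, ‖c k‖ ^ 2 * ((2 * π * k / L) ^ m * (2 * Real.sin (π * k * ε / L))) ^ 2 := by
  set b : ℤ → ℂ := fun k =>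
    c k * ((2 * π * Complex.I * k / L) ^ m * (fourier k (ε : AddCircle L) - 1))
  set F : ℝ → ℂ := fun x => ∑ k ∈ s, b k * fourier k (x : AddCircle L)
  have hF : Continuous F := continuous_finsetSum _ fun k _ =>
    continuous_const.mul (continuous_fourier_coe k)
  have hincrement : ∀ x, iteratedDeriv m φ (x + ε) - iteratedDeriv m φ x = (F x).re := by
    intro x
    rw [funext hφ, iteratedDeriv_re_sum_fourier, ← Complex.sub_re, ← sum_sub_distrib]
    simp only [F, b, fourier_coe_add]
    congr 1
    exact sum_congr rfl fun k _ => by ring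
  have hnorm : ∀ k, ‖b k‖ ^ 2 =
      ‖c k‖ ^ 2 * ((2 * π * k / L) ^ m * (2 * Real.sin (π * k * ε / L))) ^ 2 := fun k => by
    rw [norm_mul, norm_freq_pow_mul_fourier_sub_one, mul_pow, sq_abs]
  simp_rw [hincrement]
  calc ∫ x in (0 : ℝ)..L, |(F x).re| ^ 2
      ≤ ∫ x in (0 : ℝ)..L, ‖F x‖ ^ 2 :=
        integral_mono hL.le (((Complex.continuous_re.comp hF).abs.pow 2).intervalIntegrable _ _)
          (((continuous_norm.comp hF).pow 2).intervalIntegrable _ _)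
          fun x => pow_le_pow_left₀ (abs_nonneg _) (Complex.abs_re_le_norm _) 2
    _ = L * ∑ k ∈ s, ‖b k‖ ^ 2 := integral_norm_sq_sum_fourier hL s b
    _ = _ := by simp_rw [hnorm]

end TrigonometricPolynomial

noncomputable def sinHolderConst (σ : ℝ) : ℝ :=
  sSup ((fun y : ℝ => y ^ (-σ) * Real.sin y) '' Set.Ioc 0 π)

section SinHolderConst

variable {σ : ℝ}

theorem bddAbove_rpow_neg_mul_sin (hσ1 : σ ≤ 1) :
    BddAbove ((fun y : ℝ => y ^ (-σ) * Real.sin y) '' Set.Ioc 0 π) := by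
  refine ⟨π ^ (1 - σ), ?_⟩
  rintro _ ⟨y, ⟨hy0, hyπ⟩, rfl⟩
  calc y ^ (-σ) * Real.sin y ≤ y ^ (-σ) * y :=
        mul_le_mul_of_nonneg_left (Real.sin_le hy0.le) (Real.rpow_nonneg hy0.le _)
    _ = y ^ (1 - σ) := by rw [sub_eq_neg_add, Real.rpow_add hy0, Real.rpow_one]
    _ ≤ π ^ (1 - σ) := Real.rpow_le_rpow hy0.le hyπ (by linarith)

theorem rpow_neg_le_sinHolderConst (hσ1 : σ ≤ 1) : (π / 2) ^ (-σ) ≤ sinHolderConst σ := by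
  simpa [sinHolderConst] using le_csSup (bddAbove_rpow_neg_mul_sin hσ1)
    ⟨π / 2, ⟨by positivity, by linarith [Real.pi_pos]⟩, rfl⟩

theorem sinHolderConst_pos (hσ1 : σ ≤ 1) : 0 < sinHolderConst σ :=
  (Real.rpow_pos_of_pos (by positivity) _).trans_le (rpow_neg_le_sinHolderConst hσ1)

theorem abs_sin_le_sinHolderConst_mul_rpow (hσ0 : 0 ≤ σ) (hσ1 : σ ≤ 1) {y : ℝ} (hy : 0 < y) :
    |Real.sin y| ≤ sinHolderConst σ * y ^ σ := by
  rcases le_or_gt y π with hyπ | hπy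
  · have hsup : y ^ (-σ) * Real.sin y ≤ sinHolderConst σ :=
      le_csSup (bddAbove_rpow_neg_mul_sin hσ1) ⟨y, ⟨hy, hyπ⟩, rfl⟩
    calc |Real.sin y| = y ^ σ * (y ^ (-σ) * Real.sin y) := by
          rw [abs_of_nonneg (Real.sin_nonneg_of_nonneg_of_le_pi hy.le hyπ), ← mul_assoc,
            ← Real.rpow_add hy, add_neg_cancel, Real.rpow_zero, one_mul]
      _ ≤ sinHolderConst σ * y ^ σ := by
          rw [mul_comm]; exact mul_le_mul_of_nonneg_right hsup (Real.rpow_nonneg hy.le _)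
  · have hone : 1 ≤ (π / 2) ^ (-σ) * y ^ σ := by
      rw [Real.rpow_neg (by positivity), inv_mul_eq_div, ← Real.div_rpow hy.le (by positivity)]
      exact Real.one_le_rpow ((one_le_div (by positivity)).2 (by linarith)) hσ0
    calc |Real.sin y| ≤ 1 := Real.abs_sin_le_one y
      _ ≤ (π / 2) ^ (-σ) * y ^ σ := hone
      _ ≤ sinHolderConst σ * y ^ σ :=
          mul_le_mul_of_nonneg_right (rpow_neg_le_sinHolderConst hσ1) (Real.rpow_nonneg hy.le _)

end SinHolderConst

theorem rpow_two_mul_natCast_add {x : ℝ} (hx : 0 < x) (m : ℕ) (σ : ℝ) :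
    x ^ (2 * (m + σ)) = (x ^ m) ^ 2 * (x ^ σ) ^ 2 := by
  rw [mul_comm, Real.rpow_mul hx.le, Real.rpow_two, Real.rpow_add hx, Real.rpow_natCast, mul_pow]

theorem sq_freq_pow_mul_sin_le {L σ t ε : ℝ} (hL : 0 < L) (hσ0 : 0 ≤ σ) (hσ1 : σ ≤ 1) (m : ℕ)
    (ht : 0 < t) (hε : 0 < ε) :
    ((2 * π * t / L) ^ m * (2 * Real.sin (π * t * ε / L))) ^ 2 ≤
      (2 * (2 * π) ^ m * π ^ σ * sinHolderConst σ) ^ 2 * t ^ (2 * (m + σ)) *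
        ε ^ (2 * σ) / L ^ (2 * (m + σ)) := by
  have hy : 0 < π * t * ε / L := by positivity
  have hsin : Real.sin (π * t * ε / L) ^ 2 ≤ (sinHolderConst σ * (π * t * ε / L) ^ σ) ^ 2 := by
    rw [← sq_abs]
    exact pow_le_pow_left₀ (abs_nonneg _) (abs_sin_le_sinHolderConst_mul_rpow hσ0 hσ1 hy) 2
  have hyσ : (π * t * ε / L) ^ σ = π ^ σ * t ^ σ * ε ^ σ / L ^ σ := by
    rw [Real.div_rpow (by positivity) hL.le, Real.mul_rpow (by positivity) hε.le,
      Real.mul_rpow Real.pi_pos.le ht.le]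
  have hε2σ : ε ^ (2 * σ) = (ε ^ σ) ^ 2 := by
    rw [mul_comm, Real.rpow_mul hε.le, Real.rpow_two]
  calc ((2 * π * t / L) ^ m * (2 * Real.sin (π * t * ε / L))) ^ 2
      = 4 * ((2 * π * t / L) ^ m) ^ 2 * Real.sin (π * t * ε / L) ^ 2 := by ring
    _ ≤ 4 * ((2 * π * t / L) ^ m) ^ 2 * (sinHolderConst σ * (π * t * ε / L) ^ σ) ^ 2 := by
        gcongr
    _ = _ := by
        have : 0 < L ^ σ := Real.rpow_pos_of_pos hL σ
        rw [hyσ, hε2σ, rpow_two_mul_natCast_add ht, rpow_two_mul_natCast_add hL, div_pow]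
        field_simp
        ring

theorem sq_freq_pow_mul_sin_neg (L ε t : ℝ) (m : ℕ) :
    ((2 * π * -t / L) ^ m * (2 * Real.sin (π * -t * ε / L))) ^ 2 =
      ((2 * π * t / L) ^ m * (2 * Real.sin (π * t * ε / L))) ^ 2 := by
  rw [← sq_abs, ← sq_abs ((2 * π * t / L) ^ m * _)]
  simp only [abs_mul, abs_pow, neg_div, mul_neg, neg_mul, Real.sin_neg, abs_neg]

theorem sum_sq_mode_le {L σ ε : ℝ} (hL : 0 < L) (hσ0 : 0 ≤ σ) (hσ1 : σ ≤ 1) (m : ℕ)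
    (hε : 0 < ε) {s : Finset ℤ} (hs : ∀ k ∈ s, 0 < k) (c : ℤ → ℂ) :
    ∑ k ∈ s, ‖c k‖ ^ 2 * ((2 * π * k / L) ^ m * (2 * Real.sin (π * k * ε / L))) ^ 2 ≤
      (2 * (2 * π) ^ m * π ^ σ * sinHolderConst σ) ^ 2 * ε ^ (2 * σ) / L ^ (2 * (m + σ)) *
        ∑ k ∈ s, (k : ℝ) ^ (2 * (m + σ)) * ‖c k‖ ^ 2 := by
  rw [mul_sum]
  refine sum_le_sum fun k hk => ?_
  have hk : (0 : ℝ) < k := Int.cast_pos.2 (hs k hk)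
  calc ‖c k‖ ^ 2 * ((2 * π * k / L) ^ m * (2 * Real.sin (π * k * ε / L))) ^ 2
      ≤ ‖c k‖ ^ 2 * ((2 * (2 * π) ^ m * π ^ σ * sinHolderConst σ) ^ 2 *
          (k : ℝ) ^ (2 * (m + σ)) * ε ^ (2 * σ) / L ^ (2 * (m + σ))) := by
        gcongr
        exact sq_freq_pow_mul_sin_le hL hσ0 hσ1 m hk hε
    _ = _ := by ring

theorem sum_Icc_neg_eq_two_nsmul_sum_Icc_one {M : Type*} [AddCommMonoid M] {f : ℤ → M}
    (hf : ∀ k, f (-k) = f k) (h0 : f 0 = 0) (n : ℕ) :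
    ∑ k ∈ Icc (-(n : ℤ)) n, f k = 2 • ∑ k ∈ Icc (1 : ℤ) n, f k := by
  induction n with
  | zero => simp [h0]
  | succ n ih =>
    have hsymm : Icc (-((n + 1 : ℕ) : ℤ)) (n + 1 : ℕ) =
        insert (-((n : ℤ) + 1)) (insert ((n : ℤ) + 1) (Icc (-(n : ℤ)) n)) := by
      ext k; simp only [mem_Icc, mem_insert]; omega
    have hpos : Icc (1 : ℤ) (n + 1 : ℕ) = insert ((n : ℤ) + 1) (Icc (1 : ℤ) n) := by
      ext k; simp only [mem_Icc, mem_insert]; omega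
    rw [hsymm, hpos, sum_insert (by simp; omega), sum_insert (by simp), sum_insert (by simp), ih,
      hf, smul_add, two_nsmul (f _)]
    abel

theorem stmt_16_general (L : ℝ) (hL : 0 < L) (m : ℕ) (σ : ℝ) (hσ0 : 0 < σ) (hσ1 : σ ≤ 1)
    (q : ℝ) (hq : q = m + σ) (M : ℝ)
    (c₀ : ℝ)
    (hc₀ : c₀ = 2 * (2 * Real.pi) ^ m * Real.pi ^ σ *
      sSup ((fun y : ℝ => y ^ (-σ) * Real.sin y) '' Set.Ioc 0 Real.pi))
    (n : ℕ) (c : ℤ → ℂ) (hsym : ∀ k : ℤ, c (-k) = starRingEnd ℂ (c k))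
    (φ : ℝ → ℝ)
    (hφ : ∀ x : ℝ, (φ x : ℂ) =
      ∑ k ∈ Finset.Icc (-(n : ℤ)) (n : ℤ),
        c k * Complex.exp (2 * Real.pi * Complex.I * k * x / L))
    (hdecay : ∑ k ∈ Finset.Icc (1 : ℤ) (n : ℤ), (k : ℝ) ^ (2 * q) * ‖c k‖ ^ 2 ≤
      M ^ 2 / (2 * c₀ ^ 2)) :
    ∀ ε : ℝ, 0 < ε →
      (∫ x in (0:ℝ)..L,
          |iteratedDeriv m φ (x + ε) - iteratedDeriv m φ x| ^ 2 / ε ^ (2 * σ)) / L ≤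
        M ^ 2 / L ^ (2 * q) := by
  intro ε hε
  subst hq
  change c₀ = 2 * (2 * π) ^ m * π ^ σ * sinHolderConst σ at hc₀
  have hc₀pos : 0 < c₀ := hc₀ ▸ by have := sinHolderConst_pos hσ1; positivity
  have hφre : ∀ x, φ x = (∑ k ∈ Icc (-(n : ℤ)) n, c k * fourier k (x : AddCircle L)).re :=
    fun x => by simp only [fourier_coe_apply, ← hφ, Complex.ofReal_re]
  set a : ℤ → ℝ := fun k =>
    ‖c k‖ ^ 2 * ((2 * π * k / L) ^ m * (2 * Real.sin (π * k * ε / L))) ^ 2 with ha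
  have ha_neg : ∀ k, a (-k) = a k := fun k => by
    simp only [ha, hsym, Complex.norm_conj, Int.cast_neg, sq_freq_pow_mul_sin_neg]
  calc (∫ x in (0 : ℝ)..L,
          |iteratedDeriv m φ (x + ε) - iteratedDeriv m φ x| ^ 2 / ε ^ (2 * σ)) / L
      ≤ (L * ∑ k ∈ Icc (-(n : ℤ)) n, a k) / ε ^ (2 * σ) / L := by
        rw [intervalIntegral.integral_div]
        gcongr
        exact integral_sq_iteratedDeriv_sub_le hL _ c hφre m ε
    _ = 2 * (∑ k ∈ Icc (1 : ℤ) n, a k) / ε ^ (2 * σ) := by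
        rw [sum_Icc_neg_eq_two_nsmul_sum_Icc_one ha_neg (by simp [ha]) n, nsmul_eq_mul,
          Nat.cast_ofNat]
        field_simp
    _ ≤ 2 * (c₀ ^ 2 * ε ^ (2 * σ) / L ^ (2 * (m + σ)) * (M ^ 2 / (2 * c₀ ^ 2))) /
          ε ^ (2 * σ) := by
        gcongr
        have hmodes := sum_sq_mode_le hL hσ0.le hσ1 m hε (s := Icc 1 n)
          (fun k hk => (mem_Icc.1 hk).1) c
        rw [← hc₀] at hmodes
        exact hmodes.trans (by gcongr)
    _ = M ^ 2 / L ^ (2 * (m + σ)) := by field_simp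

/-- The Fourier-coefficient decay condition `Σ_{k≥1} k^{2q}|φ_k|² ≤ M²/(2c₀²)` with
`c₀ = 2(2π)^m π^σ · sup_{0<y≤π} y^{−σ} sin y` implies the generalized L²-Hölder
constraint of exponent `q = m + σ` on a real-valued trigonometric polynomial `φ`. -/
theorem stmt_16 (L : ℝ) (hL : 0 < L) (m : ℕ) (σ : ℝ) (hσ0 : 0 < σ) (hσ1 : σ ≤ 1)
    (q : ℝ) (hq : q = m + σ) (M : ℝ) (hM : 0 < M)
    (c₀ : ℝ)
    (hc₀ : c₀ = 2 * (2 * Real.pi) ^ m * Real.pi ^ σ *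
      sSup ((fun y : ℝ => y ^ (-σ) * Real.sin y) '' Set.Ioc 0 Real.pi))
    (n : ℕ) (c : ℤ → ℂ) (hsym : ∀ k : ℤ, c (-k) = starRingEnd ℂ (c k))
    (φ : ℝ → ℝ)
    (hφ : ∀ x : ℝ, (φ x : ℂ) =
      ∑ k ∈ Finset.Icc (-(n : ℤ)) (n : ℤ),
        c k * Complex.exp (2 * Real.pi * Complex.I * k * x / L))
    (hdecay : ∑ k ∈ Finset.Icc (1 : ℤ) (n : ℤ), (k : ℝ) ^ (2 * q) * ‖c k‖ ^ 2 ≤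
      M ^ 2 / (2 * c₀ ^ 2)) :
    ∀ ε : ℝ, 0 < ε →
      (∫ x in (0:ℝ)..L,
          |iteratedDeriv m φ (x + ε) - iteratedDeriv m φ x| ^ 2 / ε ^ (2 * σ)) / L ≤
        M ^ 2 / L ^ (2 * q) :=
  stmt_16_general L hL m σ hσ0 hσ1 q hq M c₀ hc₀ n c hsym φ hφ hdecay
end
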